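/- Let A, B : ℂ → ℂ with Δ(z) = A(z)² + 4B(z), and define λ±(z) = (A(z) ± √Δ(z))/2 for a fixed square root √Δ(z). Then for z with A(z) ≠ 0 and Δ(z) ≠ 0, we have |λ₊(z)| = |λ₋(z)| if and only if B(z)/A(z)² is real and less than -1/4. -/

import Mathlib

/-! With `t = s / A` the two roots are `A (1 ± t) / 2`, so they have equal modulus exactly when
`t` lies on the imaginary axis, while `B / A² = (t² - 1) / 4`. Since `Δ ≠ 0` forces `t ≠ 0`, and a
nonzero `t` is purely imaginary iff `t²` is a negative real, the condition becomes
`B / A² ∈ (-∞, -1/4)`. -/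

namespace Complex

theorem norm_one_add_eq_norm_one_sub_iff (t : ℂ) : ‖1 + t‖ = ‖1 - t‖ ↔ t.re = 0 := by
  rw [← sq_eq_sq₀ (norm_nonneg _) (norm_nonneg _), Complex.sq_norm, Complex.sq_norm, normSq_apply,
    normSq_apply]
  simp only [add_re, add_im, sub_re, sub_im, one_re, one_im]
  constructor
  · intro h
    linarith
  · intro h
    rw [h]
    ring

theorem norm_add_eq_norm_sub_iff_re_div_eq_zero {a : ℂ} (b : ℂ) (ha : a ≠ 0) :
    ‖a + b‖ = ‖a - b‖ ↔ (b / a).re = 0 := by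
  have hadd : a + b = a * (1 + b / a) := by field_simp
  have hsub : a - b = a * (1 - b / a) := by field_simp
  rw [hadd, hsub, norm_mul, norm_mul, mul_right_inj' (norm_ne_zero_iff.mpr ha),
    norm_one_add_eq_norm_one_sub_iff]

theorem sq_im_eq_zero_and_sq_re_neg_iff {t : ℂ} (ht : t ≠ 0) :
    (t ^ 2).im = 0 ∧ (t ^ 2).re < 0 ↔ t.re = 0 := by
  simp only [sq, mul_re, mul_im]
  constructor
  · rintro ⟨him, hre⟩
    have him0 : t.im ≠ 0 := by
      rintro h
      rw [h] at hre
      nlinarith [sq_nonneg t.re]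
    have hprod : t.re * t.im = 0 := by linarith
    exact (mul_eq_zero.mp hprod).resolve_right him0
  · intro hre
    have him0 : t.im ≠ 0 := fun him => ht (Complex.ext hre him)
    rw [hre]
    constructor
    · ring
    · nlinarith [mul_self_pos.mpr him0]

end Complex

open Complex

theorem abs_lambda_eq_iff (A B Δ s : ℂ) (hA : A ≠ 0) (hΔ : Δ = A ^ 2 + 4 * B)
    (hΔ0 : Δ ≠ 0) (hs : s ^ 2 = Δ) :
    ‖(A + s) / 2‖ = ‖(A - s) / 2‖ ↔
      (B / A ^ 2).im = 0 ∧ (B / A ^ 2).re < -1 / 4 := by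
  have hs0 : s ≠ 0 := by
    rintro rfl
    exact hΔ0 (by rw [← hs]; ring)
  have hB : B / A ^ 2 = ((s / A) ^ 2 - 1) / 4 := by
    rw [div_pow, hs, hΔ]
    field_simp
    ring
  rw [norm_div, norm_div, div_left_inj' (by norm_num),
    norm_add_eq_norm_sub_iff_re_div_eq_zero s hA, hB,
    ← sq_im_eq_zero_and_sq_re_neg_iff (div_ne_zero hs0 hA)]
  simp only [div_ofNat_im, div_ofNat_re, sub_im, sub_re, one_im, one_re, sub_zero]
  constructor <;> rintro ⟨him, hre⟩ <;> constructor <;> linarith
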